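/- arXiv:2011.00684 — 2 statements merged into one kernel-verified Lean document; each statement's English description precedes it below -/
import Mathlib

section
/- Let $F(E) = \sum_{n=1}^{N} \frac{p_n}{u_n - E}$ with $p_n > 0$ and real numbers $u_1 < \dots < u_N$, and let $\alpha < \beta$ be real numbers. Then the Lebesgue measure of the set $\{E \in \mathbb{R} : \alpha \le E + F(E) \le \beta\}$ (where $F$ is defined, i.e. $E \ne u_n$) equals $\beta - \alpha$. -/
/-!
On each of the `N + 1` components of `ℝ \ {u₁, …, u_N}` the map `E ↦ E + F(E)` is continuous and
strictly increasing from `-∞` to `+∞`, so `{α ≤ E + F(E) ≤ β}` is a disjoint union of `N + 1`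
intervals `[v_k, w_k]` with `E + F(E) = α` at `v_k` and `= β` at `w_k`. Clearing denominators,
the `v_k` are the `N + 1` roots of a monic polynomial of degree `N + 1` with subleading
coefficient `-(α + ∑ u_n)`, hence `∑ v_k = α + ∑ u_n`; likewise `∑ w_k = β + ∑ u_n`, and the
total length is `β - α`.
-/

open MeasureTheory Polynomial Finset Filter Set Topology Function Lagrange Bornology

namespace Polynomial

variable {R : Type*} [CommRing R]

theorem nextCoeff_eq_neg_sum_of_injective [IsDomain R] {ι : Type*} [Fintype ι] {P : R[X]}
    (hP : P.Monic) (hdeg : P.natDegree = Fintype.card ι) {r : ι → R} (hr : Injective r)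
    (hroot : ∀ i, P.IsRoot (r i)) : P.nextCoeff = -∑ i, r i := by
  have hle : univ.val.map r ≤ P.roots := (Multiset.le_iff_subset (univ.nodup.map hr)).2
    fun x hx => by
      obtain ⟨i, -, rfl⟩ := Multiset.mem_map.1 hx
      exact (mem_roots hP.ne_zero).2 (hroot i)
  have hroots : univ.val.map r = P.roots :=
    Multiset.eq_of_le_of_card_le hle (by simpa [hdeg] using card_roots' P)
  rw [(splits_iff_card_roots.2 ?_).nextCoeff_eq_neg_sum_roots_of_monic hP, ← hroots]
  · rfl
  · rw [← hroots, hdeg]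
    simp

theorem nextCoeff_sub_of_degree_lt {p q : R[X]} {n : ℕ} (hp : p.natDegree = n + 1)
    (hq : q.degree < n) : (p - q).nextCoeff = p.nextCoeff := by
  have hq' : q.natDegree < p.natDegree := by
    rw [hp]
    exact Nat.lt_succ_of_le (natDegree_le_of_degree_le hq.le)
  have hpq : (p - q).natDegree = n + 1 := by
    rw [natDegree_sub_eq_left_of_natDegree_lt hq', hp]
  rw [nextCoeff_of_natDegree_pos (by omega), nextCoeff_of_natDegree_pos (by omega), hpq, hp,
    Nat.add_sub_cancel, coeff_sub, coeff_eq_zero_of_degree_lt hq, sub_zero]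

end Polynomial

theorem StrictMonoOn.inter_preimage_Icc_eq {α β : Type*} [LinearOrder α] [Preorder β]
    {f : α → β} {s : Set α} [s.OrdConnected] (hf : StrictMonoOn f s) {a b : α} (ha : a ∈ s)
    (hb : b ∈ s) : s ∩ f ⁻¹' Icc (f a) (f b) = Icc a b := by
  ext x
  refine ⟨fun ⟨hx, hax, hxb⟩ => ⟨(hf.le_iff_le ha hx).1 hax, (hf.le_iff_le hx hb).1 hxb⟩,
    fun hx => ?_⟩
  have hxs := Set.Icc_subset s ha hb hx
  exact ⟨hxs, (hf.le_iff_le ha hxs).2 hx.1, (hf.le_iff_le hxs hb).2 hx.2⟩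

theorem div_sub_le_div_sub {a c x y : ℝ} (hc : 0 ≤ c) (hxy : x ≤ y)
    (hpos : 0 < (a - x) * (a - y)) : c / (a - x) ≤ c / (a - y) := by
  have hx : a - x ≠ 0 := left_ne_zero_of_mul hpos.ne'
  have hy : a - y ≠ 0 := right_ne_zero_of_mul hpos.ne'
  have hdiff : c / (a - y) - c / (a - x) = c * (y - x) / ((a - x) * (a - y)) := by
    field_simp
    ring
  exact sub_nonneg.1 (hdiff ▸ div_nonneg (mul_nonneg hc (sub_nonneg.2 hxy)) hpos.le)

theorem tendsto_div_sub_nhdsLT {a c : ℝ} (hc : 0 < c) :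
    Tendsto (fun E => c / (a - E)) (𝓝[<] a) atTop := by
  have : Tendsto (fun E => a - E) (𝓝[<] a) (𝓝[>] 0) := tendsto_nhdsWithin_iff.2
    ⟨((continuous_const.sub continuous_id).tendsto' a 0 (sub_self a)).mono_left nhdsWithin_le_nhds,
      eventually_nhdsWithin_of_forall fun _ hE => mem_Ioi.2 (sub_pos.2 hE)⟩
  simpa [div_eq_mul_inv] using this.inv_tendsto_nhdsGT_zero.const_mul_atTop hc

theorem tendsto_div_sub_nhdsGT {a c : ℝ} (hc : 0 < c) :
    Tendsto (fun E => c / (a - E)) (𝓝[>] a) atBot := by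
  have : Tendsto (fun E => E - a) (𝓝[>] a) (𝓝[>] 0) := tendsto_nhdsWithin_iff.2
    ⟨((continuous_id.sub continuous_const).tendsto' a 0 (sub_self a)).mono_left nhdsWithin_le_nhds,
      eventually_nhdsWithin_of_forall fun _ hE => mem_Ioi.2 (sub_pos.2 hE)⟩
  have hdiv : (fun E => c / (a - E)) = fun E => -(c * (E - a)⁻¹) := by
    funext E
    rw [← neg_sub, div_neg, div_eq_mul_inv]
  rw [hdiv]
  exact tendsto_neg_atTop_atBot.comp (this.inv_tendsto_nhdsGT_zero.const_mul_atTop hc)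

theorem tendsto_sum_div_sub_cobounded {ι K : Type*} [Fintype ι] [NormedField K] (p u : ι → K) :
    Tendsto (fun E => ∑ n, p n / (u n - E)) (cobounded K) (𝓝 0) := by
  simpa [div_eq_mul_inv] using tendsto_finsetSum univ fun n _ =>
    (tendsto_inv₀_cobounded.comp (tendsto_const_sub_cobounded (u n))).const_mul (p n)

section BoolePolynomial

variable {K ι : Type*} [Field K] [Fintype ι]

def booleFun (p u : ι → K) (E : K) : K := E + ∑ n, p n / (u n - E)

noncomputable def boolePoly [DecidableEq ι] (p u : ι → K) (t : K) : K[X] :=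
  (X - C t) * nodal univ u - ∑ n, p n • nodal (univ.erase n) u

variable (p u : ι → K) (t : K)

theorem natDegree_X_sub_C_mul_nodal :
    ((X - C t) * nodal univ u).natDegree = Fintype.card ι + 1 := by
  rw [(monic_X_sub_C t).natDegree_mul nodal_monic, natDegree_X_sub_C, natDegree_nodal, card_univ,
    add_comm]

section DecidableEq

variable [DecidableEq ι]

theorem degree_sum_smul_nodal_erase_lt :
    (∑ n, p n • nodal (univ.erase n) u).degree < Fintype.card ι :=
  (degree_sum_le _ _).trans_lt <| (Finset.sup_lt_iff (WithBot.bot_lt_coe _)).2 fun n _ =>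
    (degree_smul_le _ _).trans_lt <| by
      rw [degree_nodal]
      exact_mod_cast card_erase_lt_of_mem (mem_univ n)

theorem natDegree_sum_smul_nodal_erase_lt :
    (∑ n, p n • nodal (univ.erase n) u).natDegree < ((X - C t) * nodal univ u).natDegree := by
  rw [natDegree_X_sub_C_mul_nodal]
  exact Nat.lt_succ_of_le (natDegree_le_of_degree_le (degree_sum_smul_nodal_erase_lt p u).le)

theorem natDegree_boolePoly : (boolePoly p u t).natDegree = Fintype.card ι + 1 := by
  rw [boolePoly, natDegree_sub_eq_left_of_natDegree_lt (natDegree_sum_smul_nodal_erase_lt p u t),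
    natDegree_X_sub_C_mul_nodal]

theorem boolePoly_monic : (boolePoly p u t).Monic :=
  ((monic_X_sub_C t).mul nodal_monic).sub_of_left
    (degree_lt_degree (natDegree_sum_smul_nodal_erase_lt p u t))

theorem nextCoeff_boolePoly : (boolePoly p u t).nextCoeff = -(t + ∑ n, u n) := by
  rw [boolePoly, nextCoeff_sub_of_degree_lt (natDegree_X_sub_C_mul_nodal u t)
    (degree_sum_smul_nodal_erase_lt p u), (monic_X_sub_C t).nextCoeff_mul nodal_monic,
    nextCoeff_X_sub_C, nodal_eq, prod_X_sub_C_nextCoeff]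
  ring

theorem eval_boolePoly {E : K} (hE : ∀ n, E ≠ u n) :
    (boolePoly p u t).eval E = (∏ n, (E - u n)) * (booleFun p u E - t) := by
  have hterm : ∀ n, p n * ∏ m ∈ univ.erase n, (E - u m) =
      -(∏ m, (E - u m)) * (p n / (u n - E)) := fun n => by
    rw [← mul_prod_erase univ _ (mem_univ n)]
    field_simp [sub_ne_zero.2 (hE n).symm]
    ring
  simp only [boolePoly, eval_sub, eval_mul, eval_X, eval_C, eval_finsetSum, eval_smul, eval_nodal,
    smul_eq_mul, hterm, ← mul_sum, booleFun]
  ring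

end DecidableEq

theorem sum_eq_of_booleFun_eq {κ : Type*} [Fintype κ] (hκ : Fintype.card κ = Fintype.card ι + 1)
    {r : κ → K} (hr : Injective r) (hru : ∀ k n, r k ≠ u n) (hrt : ∀ k, booleFun p u (r k) = t) :
    ∑ k, r k = t + ∑ n, u n := by
  classical
  have hroot : ∀ k, (boolePoly p u t).IsRoot (r k) := fun k => by
    rw [IsRoot, eval_boolePoly p u t (hru k), hrt k, sub_self, mul_zero]
  have := nextCoeff_eq_neg_sum_of_injective (boolePoly_monic p u t)
    ((natDegree_boolePoly p u t).trans hκ.symm) hr hroot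
  rw [nextCoeff_boolePoly] at this
  exact (neg_inj.1 this).symm

end BoolePolynomial

section RealBooleFun

variable {ι : Type*} [Fintype ι] (p u : ι → ℝ)

theorem continuousOn_booleFun : ContinuousOn (booleFun p u) {E | ∀ n, E ≠ u n} :=
  continuousOn_id.add <| continuousOn_finsetSum _ fun n _ =>
    continuousOn_const.div (continuousOn_const.sub continuousOn_id) fun _ hE =>
      sub_ne_zero.2 (hE n).symm

theorem tendsto_booleFun_atTop : Tendsto (booleFun p u) atTop atTop :=
  tendsto_id.atTop_add
    ((tendsto_sum_div_sub_cobounded p u).mono_left IsOrderBornology.atTop_le_cobounded)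

theorem tendsto_booleFun_atBot : Tendsto (booleFun p u) atBot atBot :=
  tendsto_id.atBot_add
    ((tendsto_sum_div_sub_cobounded p u).mono_left IsOrderBornology.atBot_le_cobounded)

theorem tendsto_booleFun_sub_div_sub [DecidableEq ι] (hu : Injective u) (n : ι) :
    Tendsto (fun E => booleFun p u E - p n / (u n - E)) (𝓝 (u n))
      (𝓝 (u n + ∑ m ∈ univ.erase n, p m / (u m - u n))) := by
  have hrest : ∀ E, booleFun p u E - p n / (u n - E) = E + ∑ m ∈ univ.erase n, p m / (u m - E) :=
    fun E => by
      rw [booleFun, ← add_sum_erase univ _ (mem_univ n)]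
      ring
  simp_rw [hrest]
  refine tendsto_id.add (tendsto_finsetSum _ fun m hm => ?_)
  exact (continuousAt_const.div (continuousAt_const.sub continuousAt_id)
    (sub_ne_zero.2 (hu.ne (ne_of_mem_erase hm)))).tendsto

theorem tendsto_booleFun_nhdsLT (hu : Injective u) {n : ι} (hp : 0 < p n) :
    Tendsto (booleFun p u) (𝓝[<] u n) atTop := by
  classical
  simpa using (tendsto_div_sub_nhdsLT hp).atTop_add
    ((tendsto_booleFun_sub_div_sub p u hu n).mono_left nhdsWithin_le_nhds)

theorem tendsto_booleFun_nhdsGT (hu : Injective u) {n : ι} (hp : 0 < p n) :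
    Tendsto (booleFun p u) (𝓝[>] u n) atBot := by
  classical
  simpa using (tendsto_div_sub_nhdsGT hp).atBot_add
    ((tendsto_booleFun_sub_div_sub p u hu n).mono_left nhdsWithin_le_nhds)

end RealBooleFun

section Gaps

variable {N : ℕ}

/-- For strictly monotone `u`, the `k`-th connected component of `ℝ \ range u`, counted from the
left. -/
def booleGap (u : Fin N → ℝ) (k : Fin (N + 1)) : Set ℝ :=
  ⋂ n : Fin N, if n.castSucc < k then Ioi (u n) else Iio (u n)

variable {u : Fin N → ℝ} {k : Fin (N + 1)} {E : ℝ}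

theorem mem_booleGap :
    E ∈ booleGap u k ↔ ∀ n, E ∈ if n.castSucc < k then Ioi (u n) else Iio (u n) :=
  mem_iInter

theorem eventually_mem_booleGap {l : Filter ℝ} :
    (∀ᶠ E in l, E ∈ booleGap u k) ↔
      ∀ n, ∀ᶠ E in l, E ∈ if n.castSucc < k then Ioi (u n) else Iio (u n) := by
  simp only [mem_booleGap, eventually_all]

instance (u : Fin N → ℝ) (k : Fin (N + 1)) : (booleGap u k).OrdConnected :=
  ordConnected_iInter fun n => by split_ifs <;> infer_instance

theorem ne_of_mem_booleGap (hE : E ∈ booleGap u k) (n : Fin N) : E ≠ u n := by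
  have := mem_booleGap.1 hE n
  split_ifs at this
  exacts [ne_of_gt this, ne_of_lt this]

theorem pairwise_disjoint_booleGap (u : Fin N → ℝ) : Pairwise (Disjoint on booleGap u) := by
  refine (pairwise_disjoint_on _).2 fun k l hkl => Set.disjoint_left.2 fun E hk hl => ?_
  obtain ⟨n, rfl⟩ := Fin.exists_castSucc_eq.2 (hkl.trans_le (Fin.le_last l)).ne
  have hlt := mem_booleGap.1 hk n
  have hgt := mem_booleGap.1 hl n
  rw [if_neg (lt_irrefl _)] at hlt
  rw [if_pos hkl] at hgt
  exact lt_asymm (mem_Iio.1 hlt) hgt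

theorem injective_of_mem_booleGap {r : Fin (N + 1) → ℝ} (hr : ∀ k, r k ∈ booleGap u k) :
    Injective r :=
  fun k l h => by_contra fun hkl => (pairwise_disjoint_booleGap u hkl).ne_of_mem (hr k) (hr l) h

theorem lt_card_filter_lt_iff (hu : Monotone u) (hE : ∀ n, E ≠ u n) (n : Fin N) :
    (n : ℕ) < #{m | u m < E} ↔ u n < E := by
  refine ⟨fun hn => ?_, fun hn => ?_⟩
  · by_contra! h
    have hsub : ({m | u m < E} : Finset (Fin N)) ⊆ Finset.Iio n := fun m hm => by
      simp only [Finset.mem_filter, Finset.mem_univ, true_and] at hm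
      exact Finset.mem_Iio.2 (hu.reflect_lt (hm.trans (lt_of_le_of_ne h (hE n))))
    simpa using hn.trans_le (Finset.card_le_card hsub)
  · have hsub : Finset.Iic n ⊆ ({m | u m < E} : Finset (Fin N)) := fun m hm =>
      Finset.mem_filter.2 ⟨mem_univ m, (hu (Finset.mem_Iic.1 hm)).trans_lt hn⟩
    simpa using Finset.card_le_card hsub

theorem iUnion_booleGap (hu : Monotone u) : ⋃ k, booleGap u k = {E | ∀ n, E ≠ u n} := by
  refine Subset.antisymm (iUnion_subset fun k E hE => ne_of_mem_booleGap hE) fun E hE => ?_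
  refine mem_iUnion.2 ⟨⟨#{m | u m < E}, Nat.lt_succ_of_le ((card_filter_le _ _).trans_eq
    (card_fin N))⟩, mem_booleGap.2 fun n => ?_⟩
  have hn := lt_card_filter_lt_iff hu hE n
  split_ifs with h
  · exact hn.1 h
  · exact lt_of_le_of_ne (not_lt.1 (mt hn.2 h)) (hE n)

theorem eventually_mem_booleGap_zero : ∀ᶠ E in atBot, E ∈ booleGap u 0 :=
  eventually_mem_booleGap.2 fun n => by
    simpa [Fin.not_lt_zero] using eventually_lt_atBot (u n)

theorem eventually_mem_booleGap_last : ∀ᶠ E in atTop, E ∈ booleGap u (Fin.last N) :=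
  eventually_mem_booleGap.2 fun n => by
    simpa [Fin.castSucc_lt_last] using eventually_gt_atTop (u n)

theorem eventually_mem_booleGap_succ (hu : StrictMono u) (n : Fin N) :
    ∀ᶠ E in 𝓝[>] u n, E ∈ booleGap u n.succ := by
  refine eventually_mem_booleGap.2 fun m => ?_
  split_ifs with hm
  · exact eventually_nhdsWithin_of_forall fun E hE =>
      (hu.monotone (Fin.castSucc_lt_succ_iff.1 hm)).trans_lt hE
  · exact mem_nhdsWithin_of_mem_nhds
      (Iio_mem_nhds (hu (not_le.1 (mt Fin.castSucc_lt_succ_iff.2 hm))))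

theorem eventually_mem_booleGap_castSucc (hu : StrictMono u) (n : Fin N) :
    ∀ᶠ E in 𝓝[<] u n, E ∈ booleGap u n.castSucc := by
  refine eventually_mem_booleGap.2 fun m => ?_
  split_ifs with hm
  · exact mem_nhdsWithin_of_mem_nhds (Ioi_mem_nhds (hu (Fin.castSucc_lt_castSucc_iff.1 hm)))
  · exact eventually_nhdsWithin_of_forall fun E hE =>
      hE.trans_le (hu.monotone (not_lt.1 (mt Fin.castSucc_lt_castSucc_iff.2 hm)))

end Gaps

section BooleFunOnGaps

variable {N : ℕ} {p u : Fin N → ℝ} {k : Fin (N + 1)}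

theorem mul_sub_pos_of_mem_booleGap {x y : ℝ} (hx : x ∈ booleGap u k) (hy : y ∈ booleGap u k)
    (n : Fin N) : 0 < (u n - x) * (u n - y) := by
  have hxn := mem_booleGap.1 hx n
  have hyn := mem_booleGap.1 hy n
  split_ifs at hxn hyn
  · exact mul_pos_of_neg_of_neg (sub_neg.2 hxn) (sub_neg.2 hyn)
  · exact mul_pos (sub_pos.2 hxn) (sub_pos.2 hyn)

theorem strictMonoOn_booleFun (hp : ∀ n, 0 ≤ p n) :
    StrictMonoOn (booleFun p u) (booleGap u k) :=
  fun _ hx _ hy hxy => add_lt_add_of_lt_of_le hxy <| sum_le_sum fun n _ =>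
    div_sub_le_div_sub (hp n) hxy.le (mul_sub_pos_of_mem_booleGap hx hy n)

theorem exists_mem_booleGap_booleFun_eq (hp : ∀ n, 0 < p n) (hu : StrictMono u)
    (k : Fin (N + 1)) (c : ℝ) : ∃ E ∈ booleGap u k, booleFun p u E = c := by
  obtain ⟨l₁, _, hl₁, h₁⟩ : ∃ l : Filter ℝ, l.NeBot ∧ l ≤ 𝓟 (booleGap u k) ∧
      Tendsto (booleFun p u) l atBot := by
    obtain rfl | ⟨n, rfl⟩ := Fin.eq_zero_or_eq_succ k
    · exact ⟨atBot, inferInstance, le_principal_iff.2 eventually_mem_booleGap_zero,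
        tendsto_booleFun_atBot p u⟩
    · exact ⟨𝓝[>] u n, inferInstance, le_principal_iff.2 (eventually_mem_booleGap_succ hu n),
        tendsto_booleFun_nhdsGT p u hu.injective (hp n)⟩
  obtain ⟨l₂, _, hl₂, h₂⟩ : ∃ l : Filter ℝ, l.NeBot ∧ l ≤ 𝓟 (booleGap u k) ∧
      Tendsto (booleFun p u) l atTop := by
    obtain ⟨n, rfl⟩ | rfl := Fin.eq_castSucc_or_eq_last k
    · exact ⟨𝓝[<] u n, inferInstance,
        le_principal_iff.2 (eventually_mem_booleGap_castSucc hu n),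
        tendsto_booleFun_nhdsLT p u hu.injective (hp n)⟩
    · exact ⟨atTop, inferInstance, le_principal_iff.2 eventually_mem_booleGap_last,
        tendsto_booleFun_atTop p u⟩
  exact (OrdConnected.isPreconnected inferInstance).intermediate_value_Iii hl₁ hl₂
    ((continuousOn_booleFun p u).mono fun _ hE => ne_of_mem_booleGap hE) h₁ h₂ (mem_univ c)

theorem sum_eq_of_mem_booleGap {t : ℝ} {r : Fin (N + 1) → ℝ} (hr : ∀ k, r k ∈ booleGap u k)
    (hrt : ∀ k, booleFun p u (r k) = t) : ∑ k, r k = t + ∑ n, u n :=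
  sum_eq_of_booleFun_eq p u t (by simp) (injective_of_mem_booleGap hr)
    (fun k => ne_of_mem_booleGap (hr k)) hrt

end BooleFunOnGaps

/-- Boole-type identity: the Lebesgue measure of
`{E : α ≤ E + F(E) ≤ β}` equals `β - α`, where
`F(E) = ∑ pₙ/(uₙ - E)`. -/
theorem stmt_1 (N : ℕ) (p u : Fin N → ℝ) (hp : ∀ n, 0 < p n)
    (hu : StrictMono u) (α β : ℝ) (hαβ : α < β) :
    volume {E : ℝ | (∀ n, E ≠ u n) ∧
      α ≤ E + ∑ n, p n / (u n - E) ∧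
      E + ∑ n, p n / (u n - E) ≤ β} = ENNReal.ofReal (β - α) := by
  choose v hv_mem hv using fun k => exists_mem_booleGap_booleFun_eq hp hu k α
  choose w hw_mem hw using fun k => exists_mem_booleGap_booleFun_eq hp hu k β
  have hmono : ∀ k, StrictMonoOn (booleFun p u) (booleGap u k) :=
    fun _ => strictMonoOn_booleFun fun n => (hp n).le
  have hIcc : ∀ k, Icc (v k) (w k) ⊆ booleGap u k :=
    fun k => Set.Icc_subset _ (hv_mem k) (hw_mem k)
  have hset : {E : ℝ | (∀ n, E ≠ u n) ∧ α ≤ E + ∑ n, p n / (u n - E) ∧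
      E + ∑ n, p n / (u n - E) ≤ β} = ⋃ k, Icc (v k) (w k) := by
    simp_rw [← (hmono _).inter_preimage_Icc_eq (hv_mem _) (hw_mem _), hv, hw, ← iUnion_inter,
      iUnion_booleGap hu.monotone]
    rfl
  have hvw : ∀ k, v k ≤ w k := fun k =>
    ((hmono k).lt_iff_lt (hv_mem k) (hw_mem k)).1 (by rwa [hv, hw]) |>.le
  rw [hset, measure_iUnion (fun k l hkl => (pairwise_disjoint_booleGap u hkl).mono (hIcc k)
    (hIcc l)) fun _ => measurableSet_Icc, tsum_fintype]
  simp_rw [Real.volume_Icc]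
  rw [← ENNReal.ofReal_sum_of_nonneg fun k _ => sub_nonneg.2 (hvw k), sum_sub_distrib,
    sum_eq_of_mem_booleGap hw_mem hw, sum_eq_of_mem_booleGap hv_mem hv, add_sub_add_right_eq_sub]
end

section
/- Let $\mu$ be a finite Borel measure on $\mathbb{R}$ with Borel transform $F$ and $\alpha < \beta$ real. For $\eta > 0$ define $\phi_{\alpha,\beta}(z) = \mathrm{Im}\,\mathrm{Log}(z - \beta) - \mathrm{Im}\,\mathrm{Log}(z - \alpha)$ using the principal branch. Then $\lim_{\eta \to \infty} \eta\, \phi_{\alpha,\beta}(i\eta + F(i\eta)) = \beta - \alpha$. -/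
/-!
In the upper half-plane, `arg z = π/2 - arctan (Re z / Im z)`, so
`φ(z) = arctan ((Re z - α) / Im z) - arctan ((Re z - β) / Im z)`.
Since `‖F(iη)‖ ≤ μ(ℝ)/η`, the point `z = iη + F(iη)` has `Re z → 0` and `Im z = η + o(1)`;
as `arctan x = x + o(x)` at `0`, each term `η · arctan ((Re z - c) / Im z)` tends to `-c`.
-/

open MeasureTheory Filter Complex Topology

theorem Complex.arg_eq_pi_div_two_sub_arctan {z : ℂ} (hz : 0 < z.im) :
    arg z = Real.pi / 2 - Real.arctan (z.re / z.im) := by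
  rw [arg_of_im_pos hz, Real.arccos_eq_pi_div_two_sub_arcsin, Real.arctan_eq_arcsin]
  have hsq : √(1 + (z.re / z.im) ^ 2) = ‖z‖ / z.im := by
    have : 1 + (z.re / z.im) ^ 2 = normSq z / z.im ^ 2 := by
      rw [normSq_apply]; field_simp; ring
    rw [this, Real.sqrt_div' _ (sq_nonneg _), Real.sqrt_sq hz.le, norm_def]
  rw [hsq, div_div_div_cancel_right₀ hz.ne']

theorem Complex.im_log_sub_sub_im_log_sub {z : ℂ} (hz : 0 < z.im) (α β : ℝ) :
    (log (z - β)).im - (log (z - α)).im =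
      Real.arctan ((z.re - α) / z.im) - Real.arctan ((z.re - β) / z.im) := by
  simp only [log_im]
  rw [arg_eq_pi_div_two_sub_arctan (by simpa using hz),
    arg_eq_pi_div_two_sub_arctan (by simpa using hz)]
  simp only [sub_re, sub_im, ofReal_re, ofReal_im, sub_zero]
  ring

theorem norm_integral_inv_ofReal_sub_le (μ : Measure ℝ) [IsFiniteMeasure μ] {z : ℂ}
    (hz : z.im ≠ 0) : ‖∫ u, ((u : ℂ) - z)⁻¹ ∂μ‖ ≤ μ.real Set.univ / |z.im| := by
  have hbound (u : ℝ) : ‖((u : ℂ) - z)⁻¹‖ ≤ |z.im|⁻¹ := by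
    rw [norm_inv]
    refine inv_anti₀ (abs_pos.2 hz) ?_
    simpa using abs_im_le_norm ((u : ℂ) - z)
  simpa [div_eq_inv_mul] using norm_integral_le_of_norm_le_const (Eventually.of_forall hbound)

theorem tendsto_integral_inv_ofReal_sub_I_mul_atTop (μ : Measure ℝ) [IsFiniteMeasure μ] :
    Tendsto (fun η : ℝ => ∫ u, ((u : ℂ) - I * η)⁻¹ ∂μ) atTop (𝓝 0) := by
  refine squeeze_zero_norm' ?_
    (tendsto_const_nhds.div_atTop tendsto_id : Tendsto (fun η : ℝ => μ.real Set.univ / η) _ _)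
  filter_upwards [eventually_gt_atTop 0] with η hη
  simpa [abs_of_pos hη] using norm_integral_inv_ofReal_sub_le μ (z := I * η) (by simpa using hη.ne')

theorem tendsto_mul_arctan_of_tendsto_mul {ι : Type*} {l : Filter ι} {g a : ι → ℝ} {L : ℝ}
    (ha : Tendsto a l (𝓝 0)) (hga : Tendsto (fun i => g i * a i) l (𝓝 L)) :
    Tendsto (fun i => g i * Real.arctan (a i)) l (𝓝 L) := by
  have hderiv : (fun x => Real.arctan x - x) =o[𝓝 0] fun x => x := by
    simpa [hasDerivAt_iff_isLittleO] using Real.hasDerivAt_arctan 0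
  have herr : Tendsto (fun i => g i * (Real.arctan (a i) - a i)) l (𝓝 0) := by
    rw [← Asymptotics.isLittleO_one_iff ℝ]
    exact ((Asymptotics.isBigO_refl g l).mul_isLittleO (hderiv.comp_tendsto ha)).trans_isBigO
      (hga.isBigO_one ℝ)
  simpa [mul_sub] using hga.add herr

theorem tendsto_mul_arctan_re_sub_div_im {w : ℝ → ℂ} (hw : Tendsto w atTop (𝓝 0)) (c : ℝ) :
    Tendsto (fun η : ℝ => η * Real.arctan (((w η).re - c) / (η + (w η).im))) atTop (𝓝 (-c)) := by
  have hre : Tendsto (fun η => (w η).re - c) atTop (𝓝 (-c)) := by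
    simpa using ((continuous_re.tendsto' 0 0 rfl).comp hw).sub_const c
  have him : Tendsto (fun η => (w η).im) atTop (𝓝 0) := (continuous_im.tendsto' 0 0 rfl).comp hw
  have hden : Tendsto (fun η => η + (w η).im) atTop atTop := tendsto_id.atTop_add him
  refine tendsto_mul_arctan_of_tendsto_mul (hre.div_atTop hden) ?_
  have hratio : Tendsto (fun η => 1 + (w η).im * η⁻¹) atTop (𝓝 1) := by
    simpa using (him.mul tendsto_inv_atTop_zero).const_add 1
  have hlim : Tendsto (fun η => ((w η).re - c) / (1 + (w η).im * η⁻¹)) atTop (𝓝 (-c)) := by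
    rw [← div_one (-c)]; exact hre.div hratio one_ne_zero
  refine hlim.congr' ?_
  filter_upwards [eventually_gt_atTop 0, hden.eventually_gt_atTop 0] with η hη hη'
  field_simp

theorem tendsto_mul_im_log_sub_sub_im_log_sub {w : ℝ → ℂ} (hw : Tendsto w atTop (𝓝 0))
    (α β : ℝ) :
    Tendsto (fun η : ℝ => η * ((log (I * η + w η - β)).im - (log (I * η + w η - α)).im))
      atTop (𝓝 (β - α)) := by
  have him : Tendsto (fun η => η + (w η).im) atTop atTop :=
    tendsto_id.atTop_add ((continuous_im.tendsto' 0 0 rfl).comp hw)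
  have hlim := (tendsto_mul_arctan_re_sub_div_im hw α).sub (tendsto_mul_arctan_re_sub_div_im hw β)
  rw [neg_sub_neg] at hlim
  refine hlim.congr' ?_
  filter_upwards [him.eventually_gt_atTop 0] with η hη
  rw [im_log_sub_sub_im_log_sub (by simpa [add_comm] using hη)]
  simp [add_comm, mul_sub]

theorem stmt_3_general (μ : Measure ℝ) [IsFiniteMeasure μ] (α β : ℝ)
    (F : ℝ → ℂ) (hF : ∀ η : ℝ, 0 < η → F η = ∫ u : ℝ, ((u : ℂ) - I * η)⁻¹ ∂μ)
    (φ : ℂ → ℝ)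
    (hφ : ∀ z : ℂ, φ z = (Complex.log (z - β)).im - (Complex.log (z - α)).im) :
    Tendsto (fun η : ℝ => η * φ (I * η + F η)) atTop (nhds (β - α)) := by
  have hF0 : Tendsto F atTop (𝓝 0) := (tendsto_integral_inv_ofReal_sub_I_mul_atTop μ).congr' <|
    (eventually_gt_atTop 0).mono fun η hη => (hF η hη).symm
  simpa only [hφ] using tendsto_mul_im_log_sub_sub_im_log_sub hF0 α β

/-- With `F` the Borel transform of a finite Borel measure `μ` and
`φ_{α,β}(z) = Im Log (z - β) - Im Log (z - α)` (principal branch),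
`η · φ_{α,β}(iη + F(iη)) → β - α` as `η → ∞`. -/
theorem stmt_3 (μ : Measure ℝ) [IsFiniteMeasure μ] (α β : ℝ) (hαβ : α < β)
    (F : ℝ → ℂ) (hF : ∀ η : ℝ, 0 < η → F η = ∫ u : ℝ, ((u : ℂ) - I * η)⁻¹ ∂μ)
    (φ : ℂ → ℝ)
    (hφ : ∀ z : ℂ, φ z = (Complex.log (z - β)).im - (Complex.log (z - α)).im) :
    Tendsto (fun η : ℝ => η * φ (I * η + F η)) atTop (nhds (β - α)) :=
  stmt_3_general μ α β F hF φ hφ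
end
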